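/- Let A be a finite nonempty subset of an abelian group with D = A − A and |D| = K|A|. Then E₃(A) ≤ (1 + 2/K)(E(A) − |A|⁴/|D|)|A| + |A|⁶/|D|². -/

import Mathlib

open Finset Pointwise

/-!
Write `r x = |A ∩ (A + x)|`: it is supported on `D`, has total mass `|A|²` and is bounded by `|A|`.
For any real `f` on a finite set of size `n` with mean `c` and upper bound `M`, expanding around
the mean gives `Σ f³ = Σ (f - c)³ + 3c Σ (f - c)² + (Σ f)³ / n²`, and pointwise
`(f - c)³ ≤ (M - c)(f - c)²`, so `Σ f³ ≤ (M + 2c) Σ (f - c)² + (Σ f)³ / n²`.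
For `f = r` on `D` we have `c = |A|² / |D|`, `M = |A|` and `M + 2c = (1 + 2/K)|A|`.
-/

section CubicMoment

variable {ι : Type*} (s : Finset ι) (f : ι → ℝ)

lemma sum_sub_pow_three_le_of_le (c M : ℝ) (hf : ∀ i ∈ s, f i ≤ M) :
    ∑ i ∈ s, (f i - c) ^ 3 ≤ (M - c) * ∑ i ∈ s, (f i - c) ^ 2 := by
  rw [mul_sum]
  refine sum_le_sum fun i hi => ?_
  nlinarith [mul_le_mul_of_nonneg_left (sub_le_sub_right (hf i hi) c) (sq_nonneg (f i - c))]

lemma sum_sub_mean_sq :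
    ∑ i ∈ s, (f i - (∑ j ∈ s, f j) / #s) ^ 2 =
      ∑ i ∈ s, f i ^ 2 - (∑ i ∈ s, f i) ^ 2 / #s := by
  rcases s.eq_empty_or_nonempty with rfl | hs
  · simp
  have hn : (#s : ℝ) ≠ 0 := by positivity
  simp only [sub_sq, sum_add_distrib, sum_sub_distrib, ← sum_mul, ← mul_sum, sum_const,
    nsmul_eq_mul]
  field_simp
  ring

lemma sum_pow_three_eq_sum_sub_mean :
    ∑ i ∈ s, f i ^ 3 =
      ∑ i ∈ s, (f i - (∑ j ∈ s, f j) / #s) ^ 3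
        + 3 * ((∑ j ∈ s, f j) / #s) * ∑ i ∈ s, (f i - (∑ j ∈ s, f j) / #s) ^ 2
        + (∑ i ∈ s, f i) ^ 3 / #s ^ 2 := by
  rcases s.eq_empty_or_nonempty with rfl | hs
  · simp
  have hn : (#s : ℝ) ≠ 0 := by positivity
  set c := (∑ j ∈ s, f j) / #s with hc
  have hexp : ∀ i ∈ s, f i ^ 3 =
      (f i - c) ^ 3 + 3 * c * (f i - c) ^ 2 + 3 * c ^ 2 * f i - 2 * c ^ 3 :=
    fun i _ => by ring
  have hmean : 3 * c ^ 2 * ∑ i ∈ s, f i - #s * (2 * c ^ 3) = (∑ i ∈ s, f i) ^ 3 / #s ^ 2 := by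
    rw [hc]
    field_simp
    ring
  rw [sum_congr rfl hexp, sum_sub_distrib, sum_add_distrib, sum_add_distrib, ← mul_sum,
    ← mul_sum, sum_const, nsmul_eq_mul]
  linear_combination hmean

theorem sum_pow_three_le_of_le (M : ℝ) (hf : ∀ i ∈ s, f i ≤ M) :
    ∑ i ∈ s, f i ^ 3 ≤
      (M + 2 * (∑ i ∈ s, f i) / #s) * (∑ i ∈ s, f i ^ 2 - (∑ i ∈ s, f i) ^ 2 / #s)
        + (∑ i ∈ s, f i) ^ 3 / #s ^ 2 := by
  rw [sum_pow_three_eq_sum_sub_mean, ← sum_sub_mean_sq]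
  linear_combination sum_sub_pow_three_le_of_le s f ((∑ j ∈ s, f j) / #s) M hf

end CubicMoment

lemma one_add_two_div_mul_eq {a d K : ℝ} (h : d = K * a) :
    (1 + 2 / K) * a = a + 2 * a ^ 2 / d := by
  rcases eq_or_ne K 0 with rfl | hK
  · simp [h]
  rcases eq_or_ne a 0 with rfl | ha
  · simp
  rw [h]
  field_simp

namespace Finset

variable {G : Type*} [AddCommGroup G] [DecidableEq G]

lemma card_inter_add_singleton (A B : Finset G) (x : G) :
    #(A ∩ (B + {x})) = A.addConvolution (-B) x := by
  rw [add_singleton, op_vadd_eq_vadd, card_inter_vadd]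

lemma sum_addConvolution [Fintype G] (A B : Finset G) :
    ∑ x, A.addConvolution B x = #A * #B :=
  (card_eq_sum_card_fiberwise (fun _ _ => mem_univ _)).symm.trans (card_product A B)

end Finset

theorem E3_upper_bound_general {G : Type*} [AddCommGroup G] [Fintype G] [DecidableEq G]
    (A : Finset G) (K : ℝ)
    (hK : ((A - A).card : ℝ) = K * A.card) :
    (∑ x : G, ((A ∩ (A + {x})).card : ℝ) ^ 3) ≤
      (1 + 2 / K) *
        ((∑ x : G, ((A ∩ (A + {x})).card : ℝ) ^ 2) - (A.card : ℝ) ^ 4 / ((A - A).card : ℝ))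
        * (A.card : ℝ)
      + (A.card : ℝ) ^ 6 / ((A - A).card : ℝ) ^ 2 := by
  set r : G → ℝ := fun x => A.addConvolution (-A) x
  have hr (x : G) : ((A ∩ (A + {x})).card : ℝ) = r x := by rw [card_inter_add_singleton]
  have hrestrict (k : ℕ) (hk : k ≠ 0) : ∑ x, r x ^ k = ∑ x ∈ A - A, r x ^ k := by
    refine (sum_subset (subset_univ _) fun x _ hx => ?_).symm
    rw [sub_eq_add_neg, ← addConvolution_eq_zero] at hx
    simp [r, hx, hk]
  have hmass : ∑ x ∈ A - A, r x = #A ^ 2 := by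
    simpa [r, sq, ← Nat.cast_sum, sum_addConvolution] using (hrestrict 1 one_ne_zero).symm
  have hle (x : G) (_ : x ∈ A - A) : r x ≤ #A := Nat.cast_le.2 addConvolution_le_card_left
  simp only [hr, hrestrict 3 three_ne_zero, hrestrict 2 two_ne_zero]
  calc _ ≤ _ := sum_pow_three_le_of_le (A - A) r #A hle
    _ = _ := by
      rw [hmass]
      linear_combination ((#A : ℝ) ^ 4 / #(A - A) - ∑ x ∈ A - A, r x ^ 2) *
        one_add_two_div_mul_eq hK

theorem E3_upper_bound {G : Type*} [AddCommGroup G] [Fintype G] [DecidableEq G]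
    (A : Finset G) (hA : A.Nonempty) (K : ℝ)
    (hK : ((A - A).card : ℝ) = K * A.card) :
    (∑ x : G, ((A ∩ (A + {x})).card : ℝ) ^ 3) ≤
      (1 + 2 / K) *
        ((∑ x : G, ((A ∩ (A + {x})).card : ℝ) ^ 2) - (A.card : ℝ) ^ 4 / ((A - A).card : ℝ))
        * (A.card : ℝ)
      + (A.card : ℝ) ^ 6 / ((A - A).card : ℝ) ^ 2 :=
  E3_upper_bound_general A K hK
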